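/- arXiv:2406.14961 — 8 statements merged into one kernel-verified Lean document; each statement's English description precedes it below -/
import Mathlib

section
/- Let p be a prime and B an n×n lower-triangular matrix over ℚ_p with nonzero diagonal entries such that for each i, |B_{ii}|_p = max{|B_{jk}|_p : i ≤ k ≤ j ≤ n}. Let D = (B⁻¹)ᵀ be the transpose inverse of B. Then D is upper-triangular with D_{ii} = B_{ii}⁻¹, and for all i ≤ j one has |D_{ij}|_p ≤ |D_{jj}|_p. -/
open scoped BigOperators
open Matrix

/-- The `i`-th successive maximum of a set `Λ ⊆ ℚ_p^n` with respect to a norm `N`: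
the largest `r` such that `Λ` contains `i` linearly independent vectors of `N`-norm `≥ r`. -/
noncomputable def succMax (p : ℕ) [Fact p.Prime] (n : ℕ)
    (N : (Fin n → ℚ_[p]) → ℝ) (Λ : Set (Fin n → ℚ_[p])) (i : ℕ) : ℝ :=
  sSup {r : ℝ | ∃ s : Fin i → (Fin n → ℚ_[p]),
    (∀ k, s k ∈ Λ) ∧ LinearIndependent ℚ_[p] s ∧ ∀ k, r ≤ N (s k)}

/-- The `ℤ_p`-lattice spanned by the vectors `b`. -/
def latticeSet (p : ℕ) [Fact p.Prime] {n m : ℕ} (b : Fin m → (Fin n → ℚ_[p])) :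
    Set (Fin n → ℚ_[p]) :=
  {x | ∃ c : Fin m → ℤ_[p], x = ∑ j, (c j : ℚ_[p]) • b j}

/-- The dual lattice of `Λ` w.r.t. the standard bilinear pairing `⟨x,y⟩ = ∑ x j * y j`. -/
def dualSet (p : ℕ) [Fact p.Prime] {n : ℕ} (Λ : Set (Fin n → ℚ_[p])) :
    Set (Fin n → ℚ_[p]) :=
  {y | ∀ x ∈ Λ, ∃ z : ℤ_[p], (z : ℚ_[p]) = ∑ j, x j * y j}

/-- A family `b` is `N`-orthogonal if `N (∑ cᵢ bᵢ) = maxᵢ N (cᵢ bᵢ)` for all scalars. -/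
def IsOrthogonal (p : ℕ) [Fact p.Prime] {n m : ℕ}
    (N : (Fin n → ℚ_[p]) → ℝ) (b : Fin m → (Fin n → ℚ_[p])) : Prop :=
  ∀ c : Fin m → ℚ_[p], N (∑ i, c i • b i) = ⨆ i, N (c i • b i)

/-- dual basis matrix of a diagonally dominant lower-triangular matrix. -/
theorem stmt0 {p : ℕ} [Fact p.Prime] {n : ℕ} (B : Matrix (Fin n) (Fin n) ℚ_[p])
    (hlow : ∀ i j : Fin n, i < j → B i j = 0)
    (hdiag : ∀ i : Fin n, B i i ≠ 0)
    (hdom : ∀ i j k : Fin n, i ≤ k → k ≤ j → ‖B j k‖ ≤ ‖B i i‖) :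
    (∀ i j : Fin n, j < i → (B⁻¹)ᵀ i j = 0) ∧
    (∀ i : Fin n, (B⁻¹)ᵀ i i = (B i i)⁻¹) ∧
    (∀ i j : Fin n, i ≤ j → ‖(B⁻¹)ᵀ i j‖ ≤ ‖(B⁻¹)ᵀ j j‖) := by
  have htri : B.BlockTriangular OrderDual.toDual := fun i j h => hlow i j h
  have hdet : IsUnit B.det := by
    rw [Matrix.det_of_lowerTriangular B htri]
    exact (IsUnit.mk0 _ (fun h => by
      obtain ⟨i, _, hi⟩ := Finset.prod_eq_zero_iff.mp h
      exact hdiag i hi))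
  have hBC : B * B⁻¹ = 1 := Matrix.mul_nonsing_inv B hdet
  set C := B⁻¹ with hC
  -- C is lower triangular
  have h0 : ∀ k i : Fin n, k < i → C k i = 0 := by
    have main : ∀ m : ℕ, ∀ k i : Fin n, k.val = m → k < i → C k i = 0 := by
      intro m
      induction m using Nat.strong_induction_on with
      | _ m IH =>
        intro k i hk hki
        have hone : (1 : Matrix (Fin n) (Fin n) ℚ_[p]) k i = 0 := by
          simp [Matrix.one_apply, Fin.ne_of_lt hki]
        have := congrFun (congrFun hBC k) i
        rw [Matrix.mul_apply, hone] at this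
        have hsum : ∑ l, B k l * C l i = B k k * C k i := by
          apply Finset.sum_eq_single
          · intro l _ hl
            rcases lt_or_gt_of_ne hl with h | h
            · rw [IH l.val (hk ▸ h) l i rfl (h.trans hki), mul_zero]
            · rw [hlow k l h, zero_mul]
          · intro h; exact absurd (Finset.mem_univ k) h
        rw [hsum] at this
        exact (mul_eq_zero.mp this).resolve_left (hdiag k)
    exact fun k i h => main k.val k i rfl h
  -- diagonal of C
  have hCd : ∀ i : Fin n, B i i * C i i = 1 := by
    intro i
    have hone : (1 : Matrix (Fin n) (Fin n) ℚ_[p]) i i = 1 := by simp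
    have := congrFun (congrFun hBC i) i
    rw [Matrix.mul_apply, hone] at this
    have hsum : ∑ l, B i l * C l i = B i i * C i i := by
      apply Finset.sum_eq_single
      · intro l _ hl
        rcases lt_or_gt_of_ne hl with h | h
        · rw [h0 l i h, mul_zero]
        · rw [hlow i l h, zero_mul]
      · intro h; exact absurd (Finset.mem_univ i) h
    rw [← hsum]; exact this
  have hCdiag : ∀ i : Fin n, C i i = (B i i)⁻¹ := by
    intro i
    exact eq_inv_of_mul_eq_one_left (by rw [mul_comm]; exact hCd i)
  -- norm bound
  have hnorm : ∀ i j : Fin n, i ≤ j → ‖C j i‖ ≤ ‖B j j‖⁻¹ := by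
    intro i
    have main : ∀ m : ℕ, ∀ j : Fin n, j.val = m → i ≤ j → ‖C j i‖ ≤ ‖B j j‖⁻¹ := by
      intro m
      induction m using Nat.strong_induction_on with
      | _ m IH =>
        intro j hj hij
        rcases eq_or_lt_of_le hij with rfl | hij'
        · rw [hCdiag, norm_inv]
        · have hone : (1 : Matrix (Fin n) (Fin n) ℚ_[p]) j i = 0 := by
            simp [Matrix.one_apply, (Fin.ne_of_lt hij').symm]
          have heq := congrFun (congrFun hBC j) i
          rw [Matrix.mul_apply, hone] at heq
          have hsplit : B j j * C j i = -∑ l ∈ Finset.univ.erase j, B j l * C l i := by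
            have := Finset.sum_erase_add Finset.univ (fun l => B j l * C l i)
              (Finset.mem_univ j)
            rw [heq] at this
            linear_combination this
          have hbound : ‖∑ l ∈ Finset.univ.erase j, B j l * C l i‖ ≤ 1 := by
            apply IsUltrametricDist.norm_sum_le_of_forall_le_of_nonneg zero_le_one
            intro l hl
            have hlj : l ≠ j := Finset.ne_of_mem_erase hl
            rcases lt_or_ge l i with h | h
            · rw [h0 l i h, mul_zero, norm_zero]; exact zero_le_one
            · rcases lt_or_ge l j with h2 | h2
              · have hBl : ‖B j l‖ ≤ ‖B l l‖ := hdom l j l le_rfl h2.le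
                have hCl : ‖C l i‖ ≤ ‖B l l‖⁻¹ := IH l.val (hj ▸ h2) l rfl h
                calc ‖B j l * C l i‖ = ‖B j l‖ * ‖C l i‖ := norm_mul _ _
                  _ ≤ ‖B l l‖ * ‖B l l‖⁻¹ := by
                      apply mul_le_mul hBl hCl (norm_nonneg _) (norm_nonneg _)
                  _ = 1 := by
                      rw [mul_inv_cancel₀ (norm_ne_zero_iff.mpr (hdiag l))]
              · rw [hlow j l (lt_of_le_of_ne h2 (Ne.symm hlj)), zero_mul, norm_zero]
                exact zero_le_one
          have : ‖B j j‖ * ‖C j i‖ ≤ 1 := by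
            rw [← norm_mul, hsplit, norm_neg]; exact hbound
          have hpos : (0:ℝ) < ‖B j j‖ := norm_pos_iff.mpr (hdiag j)
          rw [← one_div, le_div_iff₀ hpos, mul_comm]
          exact this
    exact fun j hij => main j.val j rfl hij
  refine ⟨fun i j h => h0 j i h, fun i => hCdiag i, fun i j h => ?_⟩
  rw [Matrix.transpose_apply, Matrix.transpose_apply, hCdiag j, norm_inv]
  exact hnorm i j h
end

section
/- For every m ≥ 1 and prime p, consider the rank-1 lattice Λ = ℤ_p · v ⊆ ℚ_p^m where v = (1,1,…,1). Its dual (within the line spanned by v, via the standard pairing) is Λ* = ℤ_p · (1/m)(1,…,1), and with respect to the maximum norm one has λ̃_1(Λ) · λ̃_1(Λ*) = |1/m|_p. In particular, taking m = p^l, the product λ̃_1(Λ)·λ̃_1(Λ*) = p^{-l} can be made arbitrarily small, so no uniform lower/upper bound relating λ̃_1(Λ) and λ̃_1(Λ*) independent of m exists for non-full-rank lattices. -/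
open scoped BigOperators

/-!
Both lattices are rank one, `ℤ_p·w`, and the first successive maximum of `ℤ_p·w` is `‖w‖`
because `ℤ_p` scalars have norm at most `1`. Pairing `a·v` with `v` gives `a·⟨v,v⟩`, so the dual
inside the line `ℚ_p·v` is `ℤ_p·⟨v,v⟩⁻¹v`; for `v = (1,…,1)` one has `⟨v,v⟩ = m` and `‖v‖ = 1`.
-/

open Matrix

section

variable {p : ℕ} [Fact p.Prime] {n : ℕ}

theorem succMax_one_zpSpan_eq_norm {w : Fin n → ℚ_[p]} (hw : w ≠ 0) :
    succMax p n (fun x => ‖x‖) {x | ∃ c : ℤ_[p], x = (c : ℚ_[p]) • w} 1 = ‖w‖ := by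
  suffices h : {r : ℝ | ∃ s : Fin 1 → (Fin n → ℚ_[p]),
      (∀ k, s k ∈ {x | ∃ c : ℤ_[p], x = (c : ℚ_[p]) • w}) ∧ LinearIndependent ℚ_[p] s ∧
      ∀ k, r ≤ ‖s k‖} = Set.Iic ‖w‖ by
    rw [succMax, h, csSup_Iic]
  ext r
  constructor
  · rintro ⟨s, hs, -, hle⟩
    obtain ⟨c, hc⟩ := hs 0
    calc r ≤ ‖s 0‖ := hle 0
      _ = ‖(c : ℚ_[p])‖ * ‖w‖ := by rw [hc, norm_smul]
      _ ≤ 1 * ‖w‖ := by gcongr; exact c.norm_le_one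
      _ = ‖w‖ := one_mul _
  · intro hr
    exact ⟨fun _ => w, fun _ => ⟨1, by simp⟩, linearIndependent_unique_iff.mpr hw, fun _ => hr⟩

theorem lineDual_eq_zpSpan {v : Fin n → ℚ_[p]} (hv : v ⬝ᵥ v ≠ 0) :
    {y | (∃ a : ℚ_[p], y = a • v) ∧
        ∀ x ∈ {x | ∃ c : ℤ_[p], x = (c : ℚ_[p]) • v}, ∃ z : ℤ_[p], (z : ℚ_[p]) = x ⬝ᵥ y} =
      {y | ∃ c : ℤ_[p], y = (c : ℚ_[p]) • ((v ⬝ᵥ v)⁻¹ • v)} := by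
  have pairing (c a : ℚ_[p]) : (c • v) ⬝ᵥ (a • v) = c * a * (v ⬝ᵥ v) := by
    rw [smul_dotProduct, dotProduct_smul, smul_eq_mul, smul_eq_mul, mul_assoc]
  ext y
  constructor
  · rintro ⟨⟨a, rfl⟩, hdual⟩
    obtain ⟨z, hz⟩ := hdual ((1 : ℚ_[p]) • v) ⟨1, by simp⟩
    rw [pairing, one_mul] at hz
    refine ⟨z, ?_⟩
    rw [smul_smul, hz, mul_inv_cancel_right₀ hv]
  · rintro ⟨c, rfl⟩
    refine ⟨⟨c * (v ⬝ᵥ v)⁻¹, smul_smul _ _ _⟩, ?_⟩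
    rintro x ⟨d, rfl⟩
    refine ⟨d * c, ?_⟩
    rw [smul_smul, pairing, ← mul_assoc, inv_mul_cancel_right₀ hv]
    push_cast
    rfl

end

/-- for the rank-1 lattice `ℤ_p·(1,…,1) ⊆ ℚ_p^m`, the dual inside the
spanned line is `ℤ_p·(1/m)(1,…,1)`, and `λ̃₁(Λ)·λ̃₁(Λ*) = |1/m|ₚ`, which can be made
arbitrarily small. -/
theorem stmt8 {p : ℕ} [Fact p.Prime] {m : ℕ} (hm : 1 ≤ m) :
    let v : Fin m → ℚ_[p] := fun _ => 1
    let Λ : Set (Fin m → ℚ_[p]) := {x | ∃ c : ℤ_[p], x = (c : ℚ_[p]) • v}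
    let Λs : Set (Fin m → ℚ_[p]) :=
      {y | (∃ a : ℚ_[p], y = a • v) ∧
        ∀ x ∈ Λ, ∃ z : ℤ_[p], (z : ℚ_[p]) = ∑ j, x j * y j}
    Λs = {y | ∃ c : ℤ_[p], y = (c : ℚ_[p]) • ((m : ℚ_[p])⁻¹ • v)} ∧
    succMax p m (fun w => ‖w‖) Λ 1 * succMax p m (fun w => ‖w‖) Λs 1
      = ‖((m : ℚ_[p]))⁻¹‖ := by
  intro v Λ Λs
  have : Nonempty (Fin m) := ⟨⟨0, hm⟩⟩
  have hvv : v ⬝ᵥ v = m := by simp [v, dotProduct]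
  have hm0 : (m : ℚ_[p]) ≠ 0 := Nat.cast_ne_zero.mpr (by omega)
  have hv_norm : ‖v‖ = 1 := norm_one
  have hv : v ≠ 0 := norm_ne_zero_iff.mp (hv_norm ▸ one_ne_zero)
  have hdual : Λs = {y | ∃ c : ℤ_[p], y = (c : ℚ_[p]) • ((m : ℚ_[p])⁻¹ • v)} :=
    hvv ▸ lineDual_eq_zpSpan (hvv ▸ hm0)
  refine ⟨hdual, ?_⟩
  rw [hdual, succMax_one_zpSpan_eq_norm hv,
    succMax_one_zpSpan_eq_norm (smul_ne_zero (inv_ne_zero hm0) hv), norm_smul, hv_norm,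
    one_mul, mul_one]
end

section
/- Let p be a prime, N an ultrametric norm on ℚ_p^m, and let α_1,…,α_n be an N-orthogonal basis of a lattice L ⊆ ℚ_p^m. If i ≠ j and k ∈ ℤ_p satisfies N(k α_j) ≤ N(α_i), then the basis obtained by replacing α_i with α_i + k α_j is again an N-orthogonal basis of L. -/
open scoped BigOperators

/-- replacing `αᵢ` by `αᵢ + k·αⱼ` with `N(k αⱼ) ≤ N(αᵢ)` preserves being
an `N`-orthogonal basis of the lattice. -/
theorem stmt9 {p : ℕ} [Fact p.Prime] {m n : ℕ}
    (N : (Fin m → ℚ_[p]) → ℝ)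
    (hnn : ∀ v, 0 ≤ N v)
    (h0 : ∀ v, N v = 0 ↔ v = 0)
    (hsmul : ∀ (a : ℚ_[p]) (v : Fin m → ℚ_[p]), N (a • v) = ‖a‖ * N v)
    (hult : ∀ v w, N (v + w) ≤ max (N v) (N w))
    (α : Fin n → (Fin m → ℚ_[p])) (hα : LinearIndependent ℚ_[p] α)
    (horth : IsOrthogonal p N α)
    (i j : Fin n) (hij : i ≠ j) (k : ℤ_[p])
    (hk : N ((k : ℚ_[p]) • α j) ≤ N (α i)) :
    LinearIndependent ℚ_[p] (Function.update α i (α i + (k : ℚ_[p]) • α j)) ∧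
    IsOrthogonal p N (Function.update α i (α i + (k : ℚ_[p]) • α j)) ∧
    latticeSet p (Function.update α i (α i + (k : ℚ_[p]) • α j)) = latticeSet p α := by
  have hne : Nonempty (Fin n) := ⟨i⟩
  have hN0 : N 0 = 0 := (h0 0).mpr rfl
  set β := Function.update α i (α i + (k : ℚ_[p]) • α j) with hβ
  -- the key algebraic identity
  have key : ∀ c : Fin n → ℚ_[p],
      ∑ l, c l • β l = ∑ l, Function.update c j (c j + c i * k) l • α l := by
    intro c
    have h1 : ∑ l, c l • β l = ∑ l, c l • α l + (c i * (k : ℚ_[p])) • α j := by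
      rw [← Finset.sum_erase_add _ _ (Finset.mem_univ i),
          ← Finset.sum_erase_add _ (fun l => c l • α l) (Finset.mem_univ i)]
      rw [Finset.sum_congr rfl (fun l hl => by
        rw [hβ, Function.update_of_ne (Finset.ne_of_mem_erase hl)])]
      rw [hβ, Function.update_self, smul_add, smul_smul]
      abel
    have h2 : ∑ l, Function.update c j (c j + c i * k) l • α l
        = ∑ l, c l • α l + (c i * (k : ℚ_[p])) • α j := by
      rw [← Finset.sum_erase_add _ _ (Finset.mem_univ j),
          ← Finset.sum_erase_add _ (fun l => c l • α l) (Finset.mem_univ j)]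
      rw [Finset.sum_congr rfl (fun l hl => by
        rw [Function.update_of_ne (Finset.ne_of_mem_erase hl)])]
      rw [Function.update_self, add_smul]
      abel
    rw [h1, h2]
  -- N (β i) = N (α i)
  have hNβi : N (α i + (k : ℚ_[p]) • α j) = N (α i) := by
    set c0 : Fin n → ℚ_[p] := fun l => if l = i then 1 else if l = j then (k : ℚ_[p]) else 0
      with hc0
    have hsum0 : ∑ l, c0 l • α l = α i + (k : ℚ_[p]) • α j := by
      rw [← Finset.sum_erase_add _ _ (Finset.mem_univ i)]
      have : ∑ l ∈ Finset.univ.erase i, c0 l • α l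
          = ∑ l ∈ Finset.univ.erase i, (if l = j then (k : ℚ_[p]) • α j else 0) := by
        refine Finset.sum_congr rfl (fun l hl => ?_)
        have hli : l ≠ i := Finset.ne_of_mem_erase hl
        by_cases hlj : l = j
        · subst hlj; simp [hc0, hij.symm]
        · simp [hc0, hli, hlj]
      rw [this, Finset.sum_ite_eq' _ j (fun _ => (k : ℚ_[p]) • α j)]
      simp [hc0, hij.symm, Finset.mem_erase, add_comm]
    have h := horth c0
    rw [hsum0] at h
    rw [h]
    refine le_antisymm (ciSup_le fun l => ?_) ?_
    · by_cases hli : l = i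
      · simp [hc0, hli]
      · by_cases hlj : l = j
        · subst hlj; simpa [hc0, hij.symm] using hk
        · simp [hc0, hli, hlj, hN0, hnn]
    · have := le_ciSup (Set.Finite.bddAbove (Set.finite_range fun l => N (c0 l • α l))) i
      simpa [hc0] using this
  refine ⟨?_, ?_, ?_⟩
  · -- linear independence
    rw [Fintype.linearIndependent_iff] at hα ⊢
    intro c hc l
    have h := hα (Function.update c j (c j + c i * k)) (by rw [← key]; exact hc)
    have hci : c i = 0 := by
      have := h i; rwa [Function.update_of_ne hij] at this
    by_cases hlj : l = j
    · subst hlj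
      have := h l; rw [Function.update_self] at this
      simpa [hci] using this
    · have := h l; rwa [Function.update_of_ne hlj] at this
  · -- orthogonality
    intro c
    rw [key c, horth]
    set c' := Function.update c j (c j + c i * k) with hc'
    have hbβ : BddAbove (Set.range fun l => N (c l • β l)) :=
      Set.Finite.bddAbove (Set.finite_range _)
    have hbα : BddAbove (Set.range fun l => N (c' l • α l)) :=
      Set.Finite.bddAbove (Set.finite_range _)
    have hc'i : c' i = c i := Function.update_of_ne hij _ _
    have hβi : N (c i • β i) = N (c i • α i) := by
      rw [hβ, Function.update_self, hsmul, hsmul, hNβi]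
    have hkbd : N ((c i * (k : ℚ_[p])) • α j) ≤ N (c i • α i) := by
      rw [mul_smul, hsmul (c i) ((k : ℚ_[p]) • α j), hsmul (c i) (α i)]
      exact mul_le_mul_of_nonneg_left hk (norm_nonneg _)
    refine le_antisymm (ciSup_le fun l => ?_) (ciSup_le fun l => ?_)
    · by_cases hli : l = i
      · subst hli
        rw [hc'i, ← hβi]
        exact le_ciSup hbβ l
      · by_cases hlj : l = j
        · subst hlj
          have : c' l • α l = c l • β l + (c i * (k : ℚ_[p])) • α l := by
            rw [hc', Function.update_self, hβ, Function.update_of_ne hij.symm, add_smul]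
          rw [this]
          refine (hult _ _).trans (max_le ?_ ?_)
          · exact le_ciSup hbβ l
          · exact hkbd.trans (hβi.symm.le.trans (le_ciSup hbβ i))
        · have : c' l • α l = c l • β l := by
            rw [hc', Function.update_of_ne hlj, hβ, Function.update_of_ne hli]
          rw [this]; exact le_ciSup hbβ l
    · by_cases hli : l = i
      · subst hli
        rw [hβi, ← hc'i]
        exact le_ciSup hbα l
      · by_cases hlj : l = j
        · subst hlj
          have : c l • β l = c' l • α l + (-(c i * (k : ℚ_[p]))) • α l := by
            rw [hc', Function.update_self, hβ, Function.update_of_ne hij.symm, add_smul,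
              neg_smul]
            abel
          rw [this]
          refine (hult _ _).trans (max_le ?_ ?_)
          · exact le_ciSup hbα l
          · have : N ((-(c i * (k : ℚ_[p]))) • α l) = N ((c i * (k : ℚ_[p])) • α l) := by
              rw [hsmul, hsmul, norm_neg]
            rw [this]
            refine hkbd.trans ?_
            rw [← hc'i]
            exact le_ciSup hbα i
        · have : c l • β l = c' l • α l := by
            rw [hc', Function.update_of_ne hlj, hβ, Function.update_of_ne hli]
          rw [this]; exact le_ciSup hbα l
  · -- lattice equality
    ext x
    constructor
    · rintro ⟨c, rfl⟩
      refine ⟨Function.update c j (c j + c i * k), ?_⟩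
      rw [key (fun l => (c l : ℚ_[p]))]
      refine Finset.sum_congr rfl (fun l _ => ?_)
      by_cases hlj : l = j
      · subst hlj
        rw [Function.update_self, Function.update_self]
        push_cast
        ring
      · rw [Function.update_of_ne hlj, Function.update_of_ne hlj]
    · rintro ⟨c, rfl⟩
      refine ⟨Function.update c j (c j - c i * k), ?_⟩
      rw [key (fun l => ((Function.update c j (c j - c i * k) l : ℤ_[p]) : ℚ_[p]))]
      refine (Finset.sum_congr rfl (fun l _ => ?_)).symm
      by_cases hlj : l = j
      · subst hlj
        rw [Function.update_self, Function.update_self, Function.update_of_ne hij]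
        push_cast
        ring_nf
      · rw [Function.update_of_ne hlj, Function.update_of_ne hlj]
end

section
/- Let p be a prime and Λ a full-rank ℤ_p-lattice in ℚ_p^n with basis matrix B whose columns form an M-orthogonal basis of Λ, where M is the maximum norm. Let D = (B⁻¹)ᵀ, so the columns of D form the dual basis. Then the columns of D form an M-orthogonal basis of the dual lattice Λ*. -/
/-!
Write `y = ∑ eₖ dₖ` in the dual basis. Then `eₖ = ⟨bₖ, y⟩`, so ultrametrically
`‖eₖ‖ ≤ ‖bₖ‖ ‖y‖`; and the orthogonality of the `bᵢ`, applied to the expansion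
`∑ᵢ (dᵢ)ᵣ bᵢ` of the `r`-th standard basis vector, gives `‖(dₖ)ᵣ‖ ‖bₖ‖ ≤ 1`.
Together `‖eₖ dₖ‖ ≤ ‖y‖`, the nontrivial half of orthogonality. The lattice
statement is the usual characterisation of the dual basis: `y = ∑ ⟨bₖ, y⟩ dₖ`.
-/

open scoped BigOperators
open Matrix

theorem norm_dotProduct_le {ι R : Type*} [Fintype ι] [NormedRing R] [IsUltrametricDist R]
    (x y : ι → R) : ‖x ⬝ᵥ y‖ ≤ ‖x‖ * ‖y‖ :=
  IsUltrametricDist.norm_sum_le_of_forall_le_of_nonneg (by positivity) fun i _ =>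
    (norm_mul_le _ _).trans <|
      mul_le_mul (norm_le_pi_norm x i) (norm_le_pi_norm y i) (norm_nonneg _) (norm_nonneg _)

theorem mulVec_vecMul_of_mul_transpose_eq_one {m n R : Type*} [Fintype m] [Fintype n]
    [DecidableEq m] [CommSemiring R] {X Y : Matrix m n R} (h : X * Yᵀ = 1) (e : m → R) :
    X *ᵥ (e ᵥ* Y) = e := by
  rw [← mulVec_transpose, mulVec_mulVec, h, one_mulVec]

theorem vecMul_mulVec_of_transpose_mul_eq_one {m n R : Type*} [Fintype m] [Fintype n]
    [DecidableEq n] [CommSemiring R] {X Y : Matrix m n R} (h : Yᵀ * X = 1) (y : n → R) :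
    (X *ᵥ y) ᵥ* Y = y := by
  rw [← mulVec_transpose, mulVec_mulVec, h, one_mulVec]

variable {p : ℕ} [Fact p.Prime] {n : ℕ}

theorem mem_latticeSet_self {m : ℕ} (b : Fin m → Fin n → ℚ_[p]) (k : Fin m) :
    b k ∈ latticeSet p b :=
  ⟨Pi.single k 1, by
    rw [Finset.sum_eq_single k (fun j _ hj => by simp [hj]) (by simp)]
    simp⟩

theorem mem_latticeSet_iff {m : ℕ} {X : Matrix (Fin m) (Fin n) ℚ_[p]} {x : Fin n → ℚ_[p]} :
    x ∈ latticeSet p X ↔ ∃ c : Fin m → ℤ_[p], x = (fun j => (c j : ℚ_[p])) ᵥ* X := by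
  simp only [latticeSet, vecMul_eq_sum]
  rfl

namespace IsOrthogonal

variable {m : ℕ} {b : Fin m → Fin n → ℚ_[p]}

theorem norm_smul_le_norm_sum (hb : IsOrthogonal p (‖·‖) b) (c : Fin m → ℚ_[p]) (k : Fin m) :
    ‖c k • b k‖ ≤ ‖∑ i, c i • b i‖ :=
  (hb c).ge.trans' <| le_ciSup (f := fun i => ‖c i • b i‖) (Finite.bddAbove_range _) k

theorem of_norm_smul_le (h : ∀ (c : Fin m → ℚ_[p]) k, ‖c k • b k‖ ≤ ‖∑ i, c i • b i‖) :
    IsOrthogonal p (‖·‖) b := fun c =>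
  le_antisymm
    (IsUltrametricDist.norm_sum_le_of_forall_le_of_nonneg
      (Real.iSup_nonneg fun _ => norm_nonneg _) fun i _ =>
        le_ciSup (f := fun i => ‖c i • b i‖) (Finite.bddAbove_range _) i)
    (Real.iSup_le (h c) (norm_nonneg _))

variable {X Y : Matrix (Fin n) (Fin n) ℚ_[p]}

theorem norm_apply_mul_norm_le_one (hX : IsOrthogonal p (‖·‖) X) (hYX : Yᵀ * X = 1) (k r : Fin n) :
    ‖Y k r‖ * ‖X k‖ ≤ 1 := by
  have hrow : Y.col r ᵥ* X = Pi.single r 1 := by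
    rw [← row_transpose, ← single_one_vecMul, vecMul_vecMul, hYX, vecMul_one]
  have := hX.norm_smul_le_norm_sum (Y.col r) k
  rwa [← vecMul_eq_sum, hrow, norm_smul, Pi.norm_single, norm_one] at this

theorem of_mul_transpose_eq_one (hX : IsOrthogonal p (‖·‖) X) (hXY : X * Yᵀ = 1) :
    IsOrthogonal p (‖·‖) Y := by
  refine of_norm_smul_le fun e k => ?_
  rw [← vecMul_eq_sum]
  set y := e ᵥ* Y
  have hcoeff : e k = X k ⬝ᵥ y :=
    (congrFun (mulVec_vecMul_of_mul_transpose_eq_one hXY e) k).symm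
  have hek : ‖e k‖ ≤ ‖X k‖ * ‖y‖ := hcoeff ▸ norm_dotProduct_le _ _
  refine (pi_norm_le_iff_of_nonneg (norm_nonneg y)).2 fun r => ?_
  calc ‖(e k • Y k) r‖ = ‖e k‖ * ‖Y k r‖ := by rw [Pi.smul_apply, norm_smul]
    _ ≤ ‖X k‖ * ‖y‖ * ‖Y k r‖ := by gcongr
    _ = (‖Y k r‖ * ‖X k‖) * ‖y‖ := by ring
    _ ≤ 1 * ‖y‖ := by gcongr; exact hX.norm_apply_mul_norm_le_one (mul_eq_one_comm.1 hXY) k r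
    _ = ‖y‖ := one_mul _

end IsOrthogonal

theorem latticeSet_eq_dualSet_of_mul_transpose_eq_one {X Y : Matrix (Fin n) (Fin n) ℚ_[p]}
    (hXY : X * Yᵀ = 1) : latticeSet p Y = dualSet p (latticeSet p X) := by
  ext y
  constructor
  · intro hy x hx
    obtain ⟨c, rfl⟩ := mem_latticeSet_iff.1 hy
    obtain ⟨a, rfl⟩ := mem_latticeSet_iff.1 hx
    refine ⟨a ⬝ᵥ c, ?_⟩
    change _ = _ ᵥ* X ⬝ᵥ _ ᵥ* Y
    rw [← dotProduct_mulVec, mulVec_vecMul_of_mul_transpose_eq_one hXY]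
    simp [dotProduct, PadicInt.coe_sum]
  · intro hy
    choose z hz using fun k => hy (X k) (mem_latticeSet_self X k)
    have hzX : (fun k => (z k : ℚ_[p])) = X *ᵥ y := funext hz
    refine mem_latticeSet_iff.2 ⟨z, ?_⟩
    rw [hzX, vecMul_mulVec_of_transpose_mul_eq_one (mul_eq_one_comm.1 hXY)]

/-- the dual basis of an `M`-orthogonal basis is an `M`-orthogonal
basis of the dual lattice (for the maximum norm `M`). -/
theorem stmt11 {p : ℕ} [Fact p.Prime] {n : ℕ} (B : Matrix (Fin n) (Fin n) ℚ_[p])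
    (hB : IsUnit B.det)
    (horth : IsOrthogonal p (fun v => ‖v‖) (fun j => fun r => B r j)) :
    IsOrthogonal p (fun v => ‖v‖) (fun j => fun r => (B⁻¹)ᵀ r j) ∧
    latticeSet p (fun j => fun r => (B⁻¹)ᵀ r j)
      = dualSet p (latticeSet p (fun j => fun r => B r j)) := by
  -- the columns of `B` are the rows of `Bᵀ`, those of `(B⁻¹)ᵀ` the rows of `B⁻¹`
  have hdual : Bᵀ * B⁻¹ᵀ = 1 := by rw [← transpose_mul, nonsing_inv_mul B hB, transpose_one]
  exact ⟨IsOrthogonal.of_mul_transpose_eq_one (X := Bᵀ) horth hdual,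
    latticeSet_eq_dualSet_of_mul_transpose_eq_one hdual⟩
end

section
/- Let p be a prime and Λ a full-rank ℤ_p-lattice in ℚ_p^n with M-orthogonal basis b_1,…,b_n and dual basis d_1,…,d_n (satisfying ⟨b_i,d_j⟩ = δ_{ij}). Then M(b_i) · M(d_i) = 1 for every 1 ≤ i ≤ n, where M is the maximum norm on ℚ_p^n. -/
open scoped BigOperators

/-- if `b` is an `M`-orthogonal basis with dual basis `d`
(`⟨bᵢ, dⱼ⟩ = δᵢⱼ`), then `M(bᵢ)·M(dᵢ) = 1` for each `i`. -/
theorem stmt12 {p : ℕ} [Fact p.Prime] {n : ℕ}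
    (b d : Fin n → (Fin n → ℚ_[p]))
    (hb : LinearIndependent ℚ_[p] b)
    (horth : IsOrthogonal p (fun v => ‖v‖) b)
    (hdual : ∀ i j : Fin n, ∑ k, b i k * d j k = if i = j then 1 else 0) :
    ∀ i : Fin n, ‖b i‖ * ‖d i‖ = 1 := by
  intro i
  classical
  have hcard : Fintype.card (Fin n) = Module.finrank ℚ_[p] (Fin n → ℚ_[p]) := by
    simp [Module.finrank_fintype_fun_eq_card]
  have hne : Nonempty (Fin n) := ⟨i⟩
  let B := basisOfLinearIndependentOfCardEqFinrank hb hcard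
  have hB : ∀ j, B j = b j := fun j => by
    simp [B, coe_basisOfLinearIndependentOfCardEqFinrank]
  have hbne : b i ≠ 0 := hb.ne_zero i
  have hbpos : (0:ℝ) < ‖b i‖ := norm_pos_iff.mpr hbne
  -- key coordinate bound: ∀ k, ‖d i k‖ * ‖b i‖ ≤ 1
  have key : ∀ k, ‖d i k‖ * ‖b i‖ ≤ 1 := by
    intro k
    set v : Fin n → ℚ_[p] := Pi.single k 1 with hvdef
    set c : Fin n → ℚ_[p] := fun j => B.repr v j with hcdef
    have hv : ∑ j, c j • b j = v := by
      conv_rhs => rw [← B.sum_repr v]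
      simp [hB, hcdef]
    have hdik : d i k = c i := by
      have h1 : ∑ m, v m * d i m = d i k := by
        simp [hvdef, Pi.single_apply, ite_mul, Finset.sum_ite_eq']
      have h2 : ∑ m, v m * d i m = ∑ j, c j * ∑ m, b j m * d i m := by
        rw [← hv]
        simp only [Finset.sum_apply, Pi.smul_apply, smul_eq_mul, Finset.sum_mul,
          Finset.mul_sum]
        rw [Finset.sum_comm]
        congr 1; ext m; congr 1; ext j; ring
      rw [h2] at h1
      simp [hdual] at h1
      exact h1.symm
    have hnv : ‖v‖ = 1 := by
      rw [hvdef, Pi.norm_single]; simp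
    have hbdd : BddAbove (Set.range fun j => ‖c j • b j‖) :=
      (Set.finite_range _).bddAbove
    have hle : ‖c i • b i‖ ≤ ⨆ j, ‖c j • b j‖ := le_ciSup hbdd i
    have horth' : ‖v‖ = ⨆ j, ‖c j • b j‖ := by
      have := horth c; simp only at this; rw [hv] at this; exact this
    rw [← horth', hnv] at hle
    rw [norm_smul] at hle
    rw [hdik, mul_comm]
    simpa [mul_comm] using hle
  apply le_antisymm
  · -- upper bound
    have hd : ‖d i‖ ≤ ‖b i‖⁻¹ := by
      refine (pi_norm_le_iff_of_nonneg (by positivity)).mpr ?_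
      intro k
      rw [← one_div, le_div_iff₀ hbpos]
      exact key k
    calc ‖b i‖ * ‖d i‖ ≤ ‖b i‖ * ‖b i‖⁻¹ :=
          mul_le_mul_of_nonneg_left hd hbpos.le
      _ = 1 := mul_inv_cancel₀ hbpos.ne'
  · -- lower bound: 1 ≤ ‖b i‖ * ‖d i‖ from ⟨bᵢ, dᵢ⟩ = 1
    have h1 : (1:ℚ_[p]) = ∑ k, b i k * d i k := by
      have := hdual i i; simp at this; exact this.symm
    have h2 : (1:ℝ) = ‖∑ k, b i k * d i k‖ := by rw [← h1]; simp
    rw [h2]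
    refine IsUltrametricDist.norm_sum_le_of_forall_le_of_nonneg
      (mul_nonneg (norm_nonneg _) (norm_nonneg _)) ?_
    intro k _
    rw [norm_mul]
    exact mul_le_mul (norm_le_pi_norm (b i) k) (norm_le_pi_norm (d i) k)
      (norm_nonneg _) (norm_nonneg _)
end

section
/- Let K = ℚ_2(π) where π² = 2, with the unique extension |·| of the 2-adic absolute value to K (so |π| = 2^{-1/2}). Let b_1 = 1 + π and b_2 = π, and let Λ = ℤ_2 b_1 + ℤ_2 b_2 ⊆ K. Then b_1, b_2 is a |·|-orthogonal basis of Λ, but the dual basis d_1 = 1, d_2 = π − 1 (with respect to the pairing given by coordinates in the basis 1, π of K over ℚ_2) is NOT |·|-orthogonal: |d_1 + d_2| = 2^{-1/2} < 1 = max(|d_1|, |d_2|). -/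
/-!
In coordinates over `(1, π)` the absolute value of `K` is `max (|a|, r |b|)` with `r = |π| < 1`.
The combination `c₀ b₁ + c₁ b₂` has coordinates `(c₀, c₀ + c₁)`, and as `r ≤ 1` the ultrametric
inequality, applied to `c₀ + c₁` and to `c₁ = (c₀ + c₁) - c₀`, gives
`max (|c₀|, r |c₀ + c₁|) = max (|c₀|, r |c₁|)`. For the dual basis, the unit first coordinates of
`d₁ = 1` and `d₂ = π - 1` cancel in `d₁ + d₂ = π`.
-/

open scoped BigOperators

lemma iSup_fin_two {α : Type*} [ConditionallyCompleteLattice α] (f : Fin 2 → α) :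
    ⨆ i, f i = max (f 0) (f 1) :=
  eq_of_forall_ge_iff fun _ => by simp [ciSup_le_iff, Fin.forall_fin_two]

lemma max_mul_le_max_mul {a b c r : ℝ} (ha : 0 ≤ a) (hr0 : 0 ≤ r) (hr1 : r ≤ 1)
    (hc : c ≤ max a b) : max a (r * c) ≤ max a (r * b) :=
  calc max a (r * c) ≤ max a (r * max a b) := by gcongr
    _ = max a (r * b) := by
      rw [mul_max_of_nonneg _ _ hr0, ← max_assoc, max_eq_left (mul_le_of_le_one_left ha hr1)]

lemma max_norm_mul_norm_add_eq {E : Type*} [SeminormedAddCommGroup E] [IsUltrametricDist E]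
    {r : ℝ} (hr0 : 0 ≤ r) (hr1 : r ≤ 1) (x y : E) :
    max ‖x‖ (r * ‖x + y‖) = max ‖x‖ (r * ‖y‖) := by
  have hy : ‖y‖ ≤ max ‖x‖ ‖x + y‖ := by
    simpa [max_comm] using IsUltrametricDist.norm_add_le_max (x + y) (-x)
  exact le_antisymm
    (max_mul_le_max_mul (norm_nonneg _) hr0 hr1 (IsUltrametricDist.norm_add_le_max x y))
    (max_mul_le_max_mul (norm_nonneg _) hr0 hr1 hy)

section IsOrthogonal

variable {p : ℕ} [Fact p.Prime] {n : ℕ}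

lemma isOrthogonal_fin_two_iff {N : (Fin n → ℚ_[p]) → ℝ} {b : Fin 2 → Fin n → ℚ_[p]} :
    IsOrthogonal p N b ↔
      ∀ c₀ c₁ : ℚ_[p], N (c₀ • b 0 + c₁ • b 1) = max (N (c₀ • b 0)) (N (c₁ • b 1)) := by
  refine ⟨fun h c₀ c₁ => by simpa [Fin.sum_univ_two, iSup_fin_two] using h ![c₀, c₁],
    fun h c => by simpa [Fin.sum_univ_two, iSup_fin_two] using h (c 0) (c 1)⟩

lemma not_isOrthogonal_of_lt {m : ℕ} {N : (Fin n → ℚ_[p]) → ℝ}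
    {b : Fin m → Fin n → ℚ_[p]} (h : N (∑ i, b i) < ⨆ i, N (b i)) : ¬ IsOrthogonal p N b :=
  fun hb => h.ne (by simpa using hb 1)

end IsOrthogonal

section WeightedMaxNorm

variable {p : ℕ} [Fact p.Prime] {r : ℝ}

/-- For `r = |π|` this is the absolute value of `a + b π`, written in coordinates `(a, b)`. -/
noncomputable def weightedMaxNorm (r : ℝ) (v : Fin 2 → ℚ_[p]) : ℝ := max ‖v 0‖ (r * ‖v 1‖)

lemma isOrthogonal_weightedMaxNorm (hr0 : 0 ≤ r) (hr1 : r ≤ 1) :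
    IsOrthogonal p (weightedMaxNorm r) ![![1, 1], ![0, 1]] := by
  refine isOrthogonal_fin_two_iff.2 fun c₀ c₁ => ?_
  have h₀ : max ‖c₀‖ (r * ‖c₀‖) = ‖c₀‖ := max_eq_left (mul_le_of_le_one_left (norm_nonneg _) hr1)
  have h₁ : max 0 (r * ‖c₁‖) = r * ‖c₁‖ := max_eq_right (by positivity)
  simpa [weightedMaxNorm, h₀, h₁] using max_norm_mul_norm_add_eq hr0 hr1 c₀ c₁

lemma weightedMaxNorm_dual_add (hr0 : 0 ≤ r) :
    weightedMaxNorm r (![1, 0] + ![-1, 1] : Fin 2 → ℚ_[p]) = r := by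
  simp [weightedMaxNorm, hr0]

lemma max_weightedMaxNorm_dual (hr1 : r ≤ 1) :
    max (weightedMaxNorm r (![1, 0] : Fin 2 → ℚ_[p]))
      (weightedMaxNorm r (![-1, 1] : Fin 2 → ℚ_[p])) = 1 := by
  simp [weightedMaxNorm, hr1]

lemma not_isOrthogonal_weightedMaxNorm_dual (hr0 : 0 ≤ r) (hr1 : r < 1) :
    ¬ IsOrthogonal p (weightedMaxNorm r) ![![1, 0], ![-1, 1]] := by
  apply not_isOrthogonal_of_lt
  simp only [Fin.sum_univ_two, iSup_fin_two, Matrix.cons_val_zero, Matrix.cons_val_one]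
  rwa [weightedMaxNorm_dual_add hr0, max_weightedMaxNorm_dual hr1.le]

end WeightedMaxNorm

/-- in `K = ℚ₂(π)`, `π² = 2`, written in coordinates over the basis
`(1, π)` with the extended absolute value `N (a,b) = max(|a|₂, 2^{-1/2}|b|₂)`:
the basis `b₁ = 1 + π`, `b₂ = π` is `N`-orthogonal, but its dual basis
`d₁ = 1`, `d₂ = π - 1` is not, since `N(d₁ + d₂) = 2^{-1/2} < 1 = max(N d₁, N d₂)`. -/
theorem stmt13 :
    let N : (Fin 2 → ℚ_[2]) → ℝ :=
      fun v => max ‖v 0‖ ((2 : ℝ) ^ (-(1 : ℝ) / 2) * ‖v 1‖)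
    let b : Fin 2 → (Fin 2 → ℚ_[2]) := ![![1, 1], ![0, 1]]
    let d : Fin 2 → (Fin 2 → ℚ_[2]) := ![![1, 0], ![-1, 1]]
    IsOrthogonal 2 N b ∧
    ¬ IsOrthogonal 2 N d ∧
    N (d 0 + d 1) = (2 : ℝ) ^ (-(1 : ℝ) / 2) ∧
    max (N (d 0)) (N (d 1)) = 1 := by
  have hr0 : 0 ≤ (2 : ℝ) ^ (-(1 : ℝ) / 2) := by positivity
  have hr1 : (2 : ℝ) ^ (-(1 : ℝ) / 2) < 1 :=
    Real.rpow_lt_one_of_one_lt_of_neg (by norm_num) (by norm_num)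
  exact ⟨isOrthogonal_weightedMaxNorm hr0 hr1.le, not_isOrthogonal_weightedMaxNorm_dual hr0 hr1,
    weightedMaxNorm_dual_add hr0, max_weightedMaxNorm_dual hr1.le⟩
end

section
/- Let p be a prime and B an invertible n×n lower-triangular matrix over ℚ_p with |B_{ii}|_p = max{|B_{jk}|_p : i ≤ k ≤ j ≤ n} for each i. Then the columns b_1,…,b_n of B form an M-orthogonal basis of the lattice Λ = ℤ_p b_1 + ⋯ + ℤ_p b_n, i.e., M(Σ c_i b_i) = max_i |c_i|_p · |B_{ii}|_p for all c_1,…,c_n ∈ ℚ_p, where M is the maximum norm. -/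
open scoped BigOperators

/-- the columns of a diagonally dominant lower-triangular matrix form
an `M`-orthogonal basis, with `M(∑ cᵢ bᵢ) = maxᵢ |cᵢ|ₚ·|Bᵢᵢ|ₚ`. -/
theorem stmt14 {p : ℕ} [Fact p.Prime] {n : ℕ} (B : Matrix (Fin n) (Fin n) ℚ_[p])
    (hinv : IsUnit B.det)
    (hlow : ∀ i j : Fin n, i < j → B i j = 0)
    (hdom : ∀ i j k : Fin n, i ≤ k → k ≤ j → ‖B j k‖ ≤ ‖B i i‖) :
    ∀ c : Fin n → ℚ_[p],
      ‖∑ i, c i • (fun r => B r i)‖ = ⨆ i, ‖c i‖ * ‖B i i‖ := by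
  intro c
  rcases Nat.eq_zero_or_pos n with hn | hn
  · subst hn
    simp [Real.iSup_of_isEmpty]
  haveI : Nonempty (Fin n) := ⟨⟨0, hn⟩⟩
  set v : Fin n → ℚ_[p] := ∑ i, c i • (fun r => B r i) with hv
  have hcomp : ∀ r, v r = ∑ i, c i * B r i := by
    intro r
    simp [hv, Finset.sum_apply]
  set f : Fin n → ℝ := fun i => ‖c i‖ * ‖B i i‖ with hf
  have hf0 : ∀ i, 0 ≤ f i := fun i => mul_nonneg (norm_nonneg _) (norm_nonneg _)
  have hbdd : BddAbove (Set.range f) := Set.Finite.bddAbove (Set.finite_range f)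
  set M : ℝ := ⨆ i, f i with hM
  have hle : ∀ i, f i ≤ M := fun i => le_ciSup hbdd i
  have hM0 : 0 ≤ M := le_trans (hf0 ⟨0, hn⟩) (hle ⟨0, hn⟩)
  -- each term norm bound
  have hterm : ∀ r i : Fin n, ‖c i * B r i‖ ≤ f i := by
    intro r i
    rcases le_or_gt i r with h | h
    · rw [norm_mul]
      exact mul_le_mul_of_nonneg_left (hdom i r i le_rfl h) (norm_nonneg _)
    · rw [hlow r i h, mul_zero, norm_zero]
      exact hf0 i
  -- upper bound
  have hub : ‖v‖ ≤ M := by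
    rw [pi_norm_le_iff_of_nonneg hM0]
    intro r
    rw [hcomp r]
    exact IsUltrametricDist.norm_sum_le_of_forall_le_of_nonneg hM0
      (fun i _ => (hterm r i).trans (hle i))
  -- there is a maximizer
  obtain ⟨i₁, hi₁⟩ := Finite.exists_max f
  have hMeq : M = f i₁ := le_antisymm (ciSup_le hi₁) (hle i₁)
  refine le_antisymm hub ?_
  rcases eq_or_lt_of_le hM0 with h0 | hMpos
  · rw [← h0]; exact norm_nonneg _
  -- minimal maximizer
  set S : Finset (Fin n) := Finset.univ.filter (fun i => f i = M) with hS
  have hSne : S.Nonempty := ⟨i₁, by simp [hS, hMeq.symm]⟩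
  set i₀ : Fin n := S.min' hSne with hi₀
  have hi₀mem : i₀ ∈ S := S.min'_mem hSne
  have hfi₀ : f i₀ = M := by
    have := hi₀mem
    simp only [hS, Finset.mem_filter] at this
    exact this.2
  have hmin : ∀ i : Fin n, i < i₀ → f i < M := by
    intro i hi
    rcases lt_or_eq_of_le (hle i) with h | h
    · exact h
    · exact absurd (S.min'_le i (by simp [hS, h])) (not_le.mpr hi)
  -- the i₀-th component has norm M
  have hcompnorm : ‖v i₀‖ = M := by
    rw [hcomp i₀, ← Finset.add_sum_erase _ _ (Finset.mem_univ i₀)]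
    have htail : ‖∑ i ∈ Finset.univ.erase i₀, c i * B i₀ i‖ < M := by
      rcases (Finset.univ.erase i₀).eq_empty_or_nonempty with he | he
      · rw [he]; simpa using hMpos
      obtain ⟨j, hj, hjle⟩ :=
        IsUltrametricDist.exists_norm_finset_sum_le_of_nonempty he
          (fun i => c i * B i₀ i)
      refine hjle.trans_lt ?_
      have hjne : j ≠ i₀ := (Finset.mem_erase.mp hj).1
      rcases lt_or_gt_of_ne hjne with h | h
      · exact (hterm i₀ j).trans_lt (hmin j h)
      · rw [hlow i₀ j h, mul_zero, norm_zero]; exact hMpos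
    have hhead : ‖c i₀ * B i₀ i₀‖ = M := by rw [norm_mul]; exact hfi₀
    rw [IsUltrametricDist.norm_add_eq_max_of_norm_ne_norm
      ((htail.trans_le (le_of_eq hhead.symm)).ne'), hhead]
    exact max_eq_left (le_of_lt (hhead ▸ htail))
  calc M = ‖v i₀‖ := hcompnorm.symm
    _ ≤ ‖v‖ := norm_le_pi_norm v i₀
end

section
/- Let p be a prime and let α_1,…,α_m be ℚ_p-linearly independent vectors in ℚ_p^n spanning the lattice L. Suppose e_1,…,e_n is an M-orthogonal basis of ℚ_p^n (e.g., the standard basis). Then the p-adic Gram–Schmidt-style elimination algorithm — which at step i rearranges α_i,…,α_m so that N(α_i) is maximal, rearranges e_i,…,e_n so that the pivot coordinate |a_{ii}| is maximal among |a_{ji}| for j ≥ i, and then subtracts multiples (a_{il}/a_{ii})α_i from each later α_l — terminates and outputs an M-orthogonal basis of L. -/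
open scoped BigOperators

section Aux
variable {p : ℕ} [Fact p.Prime] {n : ℕ}

lemma zp_smul (d : ℤ_[p]) (x : Fin n → ℚ_[p]) : (d : ℚ_[p]) • x = d • x := by
  rw [← algebraMap_smul ℚ_[p] d x]; norm_cast

lemma ultra_le (x y : Fin n → ℚ_[p]) : ‖x + y‖ ≤ max ‖x‖ ‖y‖ := by
  rw [pi_norm_le_iff_of_nonneg (le_max_of_le_left (norm_nonneg x))]
  intro i
  calc ‖(x + y) i‖ = ‖x i + y i‖ := rfl
    _ ≤ max ‖x i‖ ‖y i‖ := Padic.nonarchimedean _ _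
    _ ≤ max ‖x‖ ‖y‖ := max_le_max (norm_le_pi_norm x i) (norm_le_pi_norm y i)

lemma ultra_eq {x y : Fin n → ℚ_[p]} (h : ‖x‖ < ‖y‖) : ‖x + y‖ = ‖y‖ := by
  apply le_antisymm ((ultra_le x y).trans (max_le h.le le_rfl))
  have h2 : ‖y‖ ≤ max ‖x + y‖ ‖x‖ := by
    calc ‖y‖ = ‖(x + y) + (-x)‖ := by ring_nf
    _ ≤ max ‖x + y‖ ‖-x‖ := ultra_le _ _
    _ = max ‖x + y‖ ‖x‖ := by rw [norm_neg]
  rcases max_cases ‖x + y‖ ‖x‖ with ⟨he, _⟩ | ⟨he, _⟩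
  · rwa [he] at h2
  · rw [he] at h2; linarith

lemma iSup_fin_succ {m : ℕ} (f : Fin (m + 1) → ℝ) (hf : ∀ i, 0 ≤ f i) :
    (⨆ i, f i) = max (f 0) (⨆ l : Fin m, f l.succ) := by
  have hbdd : BddAbove (Set.range f) := (Set.finite_range f).bddAbove
  have hbdd' : BddAbove (Set.range fun l : Fin m => f l.succ) :=
    (Set.finite_range _).bddAbove
  apply le_antisymm
  · apply ciSup_le
    intro i
    induction i using Fin.cases with
    | zero => exact le_max_left _ _
    | succ l => exact le_max_of_le_right (le_ciSup hbdd' l)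
  · apply max_le (le_ciSup hbdd 0)
    rcases isEmpty_or_nonempty (Fin m) with hE | hN
    · rw [Real.iSup_of_isEmpty]
      exact (hf 0).trans (le_ciSup hbdd 0)
    · exact ciSup_le fun l => le_ciSup hbdd l.succ

lemma latticeSet_eq_span {m : ℕ} (b : Fin m → (Fin n → ℚ_[p])) :
    latticeSet p b = ↑(Submodule.span ℤ_[p] (Set.range b)) := by
  ext x
  simp only [latticeSet, Set.mem_setOf_eq, SetLike.mem_coe, Submodule.mem_span_range_iff_exists_fun]
  constructor
  · rintro ⟨c, rfl⟩
    exact ⟨c, by simp_rw [zp_smul]⟩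
  · rintro ⟨c, rfl⟩
    exact ⟨c, by simp_rw [zp_smul]⟩

end Aux
section Key
variable {p : ℕ} [Fact p.Prime] {n : ℕ}

theorem key (m : ℕ) : ∀ (α : Fin m → (Fin n → ℚ_[p])), LinearIndependent ℚ_[p] α →
    ∃ β : Fin m → (Fin n → ℚ_[p]),
      LinearIndependent ℚ_[p] β ∧
      IsOrthogonal p (fun v => ‖v‖) β ∧
      Submodule.span ℤ_[p] (Set.range β) = Submodule.span ℤ_[p] (Set.range α) := by
  induction m with
  | zero =>
    intro α hα
    refine ⟨α, hα, ?_, rfl⟩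
    intro c
    simp [Real.iSup_of_isEmpty]
  | succ m ih =>
    intro α hα
    obtain ⟨i0, -, hi0⟩ := Finset.exists_max_image Finset.univ (fun i => ‖α i‖)
      ⟨0, Finset.mem_univ 0⟩
    set σ := Equiv.swap (0 : Fin (m + 1)) i0 with hσ
    set α' : Fin (m + 1) → (Fin n → ℚ_[p]) := α ∘ σ with hα'def
    have hα' : LinearIndependent ℚ_[p] α' := hα.comp σ σ.injective
    have hrange : Set.range α' = Set.range α := σ.surjective.range_comp α
    have hα'0 : α' 0 = α i0 := by
      simp [hα'def, hσ, Equiv.swap_apply_left]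
    have hmax : ∀ i, ‖α' i‖ ≤ ‖α' 0‖ := by
      intro i
      rw [hα'0]
      exact hi0 (σ i) (Finset.mem_univ _)
    have h0 : α' 0 ≠ 0 := hα'.ne_zero 0
    have hn : ∃ j, α' 0 j ≠ 0 := by
      by_contra h
      push_neg at h
      exact h0 (funext h)
    obtain ⟨j', hj'⟩ := hn
    obtain ⟨j1, -, hj1max⟩ := Finset.exists_max_image Finset.univ (fun j => ‖α' 0 j‖)
      ⟨j', Finset.mem_univ _⟩
    have hj1 : ‖α' 0 j1‖ = ‖α' 0‖ := by
      refine le_antisymm (norm_le_pi_norm _ j1) ?_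
      rw [pi_norm_le_iff_of_nonneg (norm_nonneg _)]
      intro j
      exact hj1max j (Finset.mem_univ _)
    have h0pos : 0 < ‖α' 0‖ := norm_pos_iff.mpr h0
    have ha : α' 0 j1 ≠ 0 := by
      intro h
      rw [h, norm_zero] at hj1
      exact h0pos.ne hj1
    set d : Fin m → ℚ_[p] := fun l => α' l.succ j1 / α' 0 j1 with hddef
    have hd : ∀ l, ‖d l‖ ≤ 1 := by
      intro l
      rw [hddef]
      simp only [norm_div]
      rw [div_le_one (by rwa [hj1])]
      calc ‖α' l.succ j1‖ ≤ ‖α' l.succ‖ := norm_le_pi_norm _ j1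
        _ ≤ ‖α' 0‖ := hmax _
        _ = ‖α' 0 j1‖ := hj1.symm
    set γ : Fin m → (Fin n → ℚ_[p]) := fun l => α' l.succ - d l • α' 0 with hγdef
    have hγj1 : ∀ l, γ l j1 = 0 := by
      intro l
      simp only [hγdef, Pi.sub_apply, Pi.smul_apply, smul_eq_mul, hddef]
      rw [div_mul_cancel₀ _ ha, sub_self]
    have hγsucc : ∀ l, α' l.succ = γ l + d l • α' 0 := by
      intro l
      simp [hγdef]
    have hγ : LinearIndependent ℚ_[p] γ := by
      rw [Fintype.linearIndependent_iff] at hα' ⊢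
      intro c hc l
      have hkey : ∑ i, (Fin.cons (-∑ k, c k * d k) c : Fin (m + 1) → ℚ_[p]) i • α' i
          = 0 := by
        rw [Fin.sum_univ_succ]
        simp only [Fin.cons_zero, Fin.cons_succ]
        have h2 : ∑ k, c k • α' k.succ = ∑ k, (c k • γ k + (c k * d k) • α' 0) := by
          refine Finset.sum_congr rfl fun k _ => ?_
          rw [hγsucc k]
          module
        rw [h2, Finset.sum_add_distrib, hc, zero_add, ← Finset.sum_smul]
        module
      have := hα' _ hkey l.succ
      simpa using this
    obtain ⟨β', hβ'li, hβ'orth, hβ'span⟩ := ih γ hγ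
    set β : Fin (m + 1) → (Fin n → ℚ_[p]) := Fin.cons (α' 0) β' with hβdef
    have hβ0 : β 0 = α' 0 := Fin.cons_zero _ _
    have hβsucc : ∀ l : Fin m, β l.succ = β' l := fun l => Fin.cons_succ _ _ l
    -- every element of the span of γ vanishes at j1
    have hspanj1 : ∀ x ∈ Submodule.span ℤ_[p] (Set.range γ), x j1 = 0 := by
      intro x hx
      induction hx using Submodule.span_induction with
      | mem x hx => obtain ⟨l, rfl⟩ := hx; exact hγj1 l
      | zero => rfl
      | add x y _ _ hx hy => rw [Pi.add_apply, hx, hy, add_zero]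
      | smul z x _ hx => rw [Pi.smul_apply, hx, smul_zero]
    have hβ'j1 : ∀ l, β' l j1 = 0 := by
      intro l
      apply hspanj1
      rw [← hβ'span]
      exact Submodule.subset_span ⟨l, rfl⟩
    -- orthogonality of β
    have hβorth : IsOrthogonal p (fun v => ‖v‖) β := by
      intro c
      have hsum : ∑ i, c i • β i = c 0 • α' 0 + ∑ l, c l.succ • β' l := by
        rw [Fin.sum_univ_succ, hβ0]
        simp_rw [hβsucc]
      set w : Fin n → ℚ_[p] := ∑ l, c l.succ • β' l with hwdef
      have hw : ‖w‖ = ⨆ l, ‖c l.succ • β' l‖ := hβ'orth (fun l => c l.succ)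
      have hwj1 : w j1 = 0 := by
        rw [hwdef, Finset.sum_apply]
        refine Finset.sum_eq_zero fun l _ => ?_
        rw [Pi.smul_apply, hβ'j1, smul_zero]
      have hRHS : (⨆ i, ‖c i • β i‖) = max ‖c 0 • α' 0‖ (⨆ l : Fin m, ‖c l.succ • β' l‖) := by
        rw [iSup_fin_succ (fun i => ‖c i • β i‖) (fun i => norm_nonneg _), hβ0]
        simp_rw [hβsucc]
      simp only []
      rw [hsum, hRHS, ← hw]
      rcases lt_or_ge ‖c 0 • α' 0‖ ‖w‖ with h | h
      · rw [ultra_eq h, max_eq_right h.le]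
      · have hcoord : (c 0 • α' 0 + w) j1 = c 0 * α' 0 j1 := by
          rw [Pi.add_apply, hwj1, add_zero, Pi.smul_apply, smul_eq_mul]
        have hnorm0 : ‖c 0 • α' 0‖ = ‖c 0‖ * ‖α' 0‖ := norm_smul _ _
        refine le_antisymm ((ultra_le _ _).trans (max_le le_rfl h) |>.trans ?_) ?_
        · rw [max_eq_left h]
        · rw [max_eq_left h]
          calc ‖c 0 • α' 0‖ = ‖c 0‖ * ‖α' 0‖ := hnorm0
            _ = ‖c 0‖ * ‖α' 0 j1‖ := by rw [hj1]
            _ = ‖c 0 * α' 0 j1‖ := (norm_mul _ _).symm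
            _ = ‖(c 0 • α' 0 + w) j1‖ := by rw [hcoord]
            _ ≤ ‖c 0 • α' 0 + w‖ := norm_le_pi_norm _ j1
    -- β is nonzero everywhere
    have hβne : ∀ i, β i ≠ 0 := by
      intro i
      induction i using Fin.cases with
      | zero => rw [hβ0]; exact h0
      | succ l => rw [hβsucc]; exact hβ'li.ne_zero l
    -- linear independence from orthogonality
    have hβli : LinearIndependent ℚ_[p] β := by
      rw [Fintype.linearIndependent_iff]
      intro c hc i
      have h1 : (0 : ℝ) = ⨆ i, ‖c i • β i‖ := by
        have := hβorth c
        rw [hc] at this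
        simpa using this
      by_contra hci
      have hpos : 0 < ‖c i • β i‖ := by
        rw [norm_smul]
        exact mul_pos (norm_pos_iff.mpr hci) (norm_pos_iff.mpr (hβne i))
      have hle : ‖c i • β i‖ ≤ ⨆ i, ‖c i • β i‖ :=
        le_ciSup (f := fun i => ‖c i • β i‖) (Set.finite_range _).bddAbove i
      linarith [h1 ▸ hle]
    -- span equality
    set D : Fin m → ℤ_[p] := fun l => ⟨d l, hd l⟩ with hDdef
    have hDsmul : ∀ l (x : Fin n → ℚ_[p]), d l • x = D l • x := fun l x => zp_smul (D l) x
    have hspan : Submodule.span ℤ_[p] (Set.range β) = Submodule.span ℤ_[p] (Set.range α') := by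
      have hrβ : Set.range β = insert (α' 0) (Set.range β') := by
        rw [hβdef, Fin.range_cons]
      rw [hrβ]
      apply le_antisymm
      · rw [Submodule.span_le]
        rintro x hx
        rcases Set.mem_insert_iff.mp hx with rfl | ⟨l, rfl⟩
        · exact Submodule.subset_span ⟨0, rfl⟩
        · have hmem : β' l ∈ Submodule.span ℤ_[p] (Set.range γ) := by
            rw [← hβ'span]; exact Submodule.subset_span ⟨l, rfl⟩
          refine Submodule.span_le.mpr ?_ hmem
          rintro y ⟨k, rfl⟩
          have : γ k = α' k.succ - D k • α' 0 := by rw [hγdef]; simp [hDsmul]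
          rw [SetLike.mem_coe, this]
          exact Submodule.sub_mem _ (Submodule.subset_span ⟨k.succ, rfl⟩)
            (Submodule.smul_mem _ _ (Submodule.subset_span ⟨0, rfl⟩))
      · rw [Submodule.span_le]
        rintro x ⟨i, rfl⟩
        induction i using Fin.cases with
        | zero => exact Submodule.subset_span (Set.mem_insert _ _)
        | succ l =>
          have hγmem : γ l ∈ Submodule.span ℤ_[p] (insert (α' 0) (Set.range β')) := by
            have : γ l ∈ Submodule.span ℤ_[p] (Set.range β') := by
              rw [hβ'span]; exact Submodule.subset_span ⟨l, rfl⟩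
            exact Submodule.span_mono (Set.subset_insert _ _) this
          rw [SetLike.mem_coe, hγsucc l, hDsmul]
          exact Submodule.add_mem _ hγmem
            (Submodule.smul_mem _ _ (Submodule.subset_span (Set.mem_insert _ _)))
    refine ⟨β, hβli, hβorth, ?_⟩
    rw [hspan, ← hrange]
end Key

/-- the `p`-adic orthogonalization algorithm terminates and outputs an
`M`-orthogonal basis of the lattice `L` spanned by `α₁,…,α_m`, given an `M`-orthogonal
basis `e₁,…,eₙ` of `ℚ_p^n`. -/
theorem stmt16 {p : ℕ} [Fact p.Prime] {n m : ℕ}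
    (α : Fin m → (Fin n → ℚ_[p])) (hα : LinearIndependent ℚ_[p] α)
    (e : Fin n → (Fin n → ℚ_[p])) (he : LinearIndependent ℚ_[p] e)
    (heo : IsOrthogonal p (fun v => ‖v‖) e) :
    ∃ β : Fin m → (Fin n → ℚ_[p]),
      LinearIndependent ℚ_[p] β ∧
      IsOrthogonal p (fun v => ‖v‖) β ∧
      latticeSet p β = latticeSet p α := by
  obtain ⟨β, h1, h2, h3⟩ := key m α hα
  exact ⟨β, h1, h2, by rw [latticeSet_eq_span, latticeSet_eq_span, h3]⟩
end
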